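/- Every i-Fibonacci word f^[i] (i ≥ 1) is a Sturmian word, i.e., its subword complexity satisfies P(f^[i], n) = n + 1 for all n ≥ 0. -/

import Mathlib

def genFibWord (i : ℕ) : ℕ → List ℕ
  | 0 => [0]
  | 1 => List.replicate (i - 1) 0 ++ [1]
  | n + 2 => genFibWord i (n + 1) ++ genFibWord i n

def iFibWord (i : ℕ) (n : ℕ) : ℕ := (genFibWord i (n + 2)).getD n 0

def factorsOfLength (w : ℕ → ℕ) (n : ℕ) : Set (List ℕ) :=
  { u | ∃ k : ℕ, u = (List.range n).map (fun j => w (k + j)) }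

noncomputable section
namespace GF

def phi : ℝ := (1 + Real.sqrt 5) / 2

lemma sqrt5_sq : Real.sqrt 5 ^ 2 = 5 := Real.sq_sqrt (by norm_num)

lemma sqrt5_gt_two : 2 < Real.sqrt 5 := by
  have := Real.lt_sqrt (x := 2) (y := 5) (by norm_num)
  rw [this]; norm_num

lemma sqrt5_lt_three : Real.sqrt 5 < 3 := by
  rw [show (3:ℝ) = Real.sqrt 9 by rw [show (9:ℝ) = 3^2 by norm_num, Real.sqrt_sq]; norm_num]
  exact Real.sqrt_lt_sqrt (by norm_num) (by norm_num)

lemma phi_gt : (3:ℝ)/2 < phi := by unfold phi; nlinarith [sqrt5_gt_two]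
lemma one_lt_phi : (1:ℝ) < phi := by nlinarith [phi_gt]
lemma phi_lt_two : phi < 2 := by unfold phi; nlinarith [sqrt5_lt_three]
lemma phi_pos : (0:ℝ) < phi := by nlinarith [one_lt_phi]
lemma phi_sq : phi ^ 2 = phi + 1 := by unfold phi; nlinarith [sqrt5_sq]

lemma irrational_phi : Irrational phi := by
  have h5 : Irrational (Real.sqrt 5) := (Nat.prime_five).irrational_sqrt
  have : Irrational ((1:ℝ) + Real.sqrt 5) := by simpa using h5.ratCast_add 1
  unfold phi
  rw [div_eq_mul_inv]
  simpa using this.mul_ratCast (q := (2:ℚ)⁻¹) (by norm_num)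

def t : ℝ := phi - 1
lemma t_pos : 0 < t := by unfold t; linarith [one_lt_phi]
lemma t_lt_one : t < 1 := by unfold t; linarith [phi_lt_two]
lemma t_mul_phi : t * phi = 1 := by unfold t; nlinarith [phi_sq]

variable (i : ℕ)

def beta : ℝ := (i : ℝ) - 1 + phi
def alpha : ℝ := (beta i)⁻¹

variable (hi : 1 ≤ i)
include hi

lemma beta_gt_one : 1 < beta i := by
  unfold beta
  have : (1:ℝ) ≤ (i:ℝ) := by exact_mod_cast hi
  linarith [one_lt_phi]

lemma beta_pos : 0 < beta i := lt_trans one_pos (beta_gt_one i hi)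

lemma alpha_pos : 0 < alpha i := inv_pos.2 (beta_pos i hi)

lemma alpha_lt_one : alpha i < 1 := by
  rw [alpha, inv_lt_one_iff₀]; right; exact beta_gt_one i hi

lemma alpha_mul_beta : alpha i * beta i = 1 :=
  inv_mul_cancel₀ (ne_of_gt (beta_pos i hi))

omit hi in
lemma irrational_alpha : Irrational (alpha i) := by
  have hb : Irrational (beta i) := by
    unfold beta
    have : Irrational ((i:ℝ) - 1 + phi) := by
      have := (irrational_phi).ratCast_add ((i:ℚ) - 1)
      simpa [add_comm] using this
    exact this
  simpa [alpha] using hb.inv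


def L : ℕ → ℕ
  | 0 => 1
  | 1 => i
  | n + 2 => L (n+1) + L n

lemma length_gen : ∀ n, (genFibWord i n).length = L i n
  | 0 => by simp [genFibWord, L]
  | 1 => by simp [genFibWord, L]; omega
  | n + 2 => by
      simp [genFibWord, L, length_gen (n+1), length_gen n]

lemma L_pos : ∀ n, 1 ≤ L i n
  | 0 => le_refl 1
  | 1 => hi
  | n + 2 => le_trans (L_pos (n+1)) (by have h : L i (n+2) = L i (n+1) + L i n := rfl; omega)

lemma lt_L : ∀ n, n < L i (n + 2)
  | 0 => by have h : L i (0+2) = i + 1 := rfl; omega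
  | n + 1 => by
      have h1 := lt_L n
      have h2 := L_pos i hi (n+1)
      have h3 : L i (n+1+2) = L i (n+2) + L i (n+1) := rfl
      omega

omit hi in
lemma D_eq : ∀ n, (L i n : ℝ) - (Nat.fib n : ℝ) * beta i = (-t) ^ n
  | 0 => by simp [L]
  | 1 => by
      have h : L i 1 = i := rfl
      rw [h, Nat.fib_one]; unfold beta t; push_cast; ring
  | n + 2 => by
      have h1 := D_eq (n+1)
      have h2 := D_eq n
      have hL : (L i (n+2) : ℝ) = L i (n+1) + L i n := by
        push_cast [L]; ring
      have hF : (Nat.fib (n+2) : ℝ) = Nat.fib (n+1) + Nat.fib n := by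
        push_cast [Nat.fib_add_two]; ring
      have ht : (-t) ^ (n+2) = (-t)^(n+1) + (-t)^n := by
        have h : t^2 + t - 1 = 0 := by unfold t; nlinarith [phi_sq]
        linear_combination ((-t)^n) * h
      rw [hL, hF, ht]
      linarith [h1, h2]

lemma delta_eq (n : ℕ) : (L i n : ℝ) * alpha i - (Nat.fib n : ℝ) = (-t) ^ n * alpha i := by
  have hb := D_eq i n
  linear_combination (alpha i) * hb + (Nat.fib n : ℝ) * (alpha_mul_beta i hi)

omit hi in
lemma det_eq : ∀ n, (L i n : ℤ) * (Nat.fib (n+1) : ℤ) - (L i (n+1) : ℤ) * (Nat.fib n : ℤ) = (-1) ^ n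
  | 0 => by norm_num [L]
  | n + 1 => by
      have h := det_eq n
      have hL : (L i (n+2) : ℤ) = L i (n+1) + L i n := by push_cast [L]; ring
      have hF : (Nat.fib (n+2) : ℤ) = Nat.fib (n+1) + Nat.fib n := by
        push_cast [Nat.fib_add_two]; ring
      rw [hL, hF]
      have : (-1:ℤ)^(n+1) = -((-1)^n) := by ring
      rw [this]
      linear_combination -h


lemma dist_lb (n : ℕ) (m : ℕ) (p : ℤ) (hm1 : 1 ≤ m) (hm2 : m ≤ L i (n+1)) :
    t^(n+1) * alpha i ≤ |(m:ℝ) * alpha i - (p:ℝ)| := by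
  have hdet := det_eq i (n+1)
  have hs : ((-1:ℤ)^(n+1)) * ((-1:ℤ)^(n+1)) = 1 := by
    rw [← pow_add]
    have h2 : (n+1) + (n+1) = 2*(n+1) := by ring
    rw [h2, pow_mul]; norm_num
  obtain ⟨x, y, hm, hp⟩ : ∃ x y : ℤ,
      (m:ℤ) = x * L i (n+1) + y * L i (n+2) ∧
      (p:ℤ) = x * Nat.fib (n+1) + y * Nat.fib (n+2) := by
    refine ⟨(-1:ℤ)^(n+1) * ((m:ℤ) * Nat.fib (n+2) - p * L i (n+2)),
           (-1:ℤ)^(n+1) * ((p:ℤ) * L i (n+1) - (m:ℤ) * Nat.fib (n+1)), ?_, ?_⟩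
    · linear_combination (-((-1:ℤ)^(n+1) * (m:ℤ))) * hdet + (-(m:ℤ)) * hs
    · linear_combination (-((-1:ℤ)^(n+1) * (p:ℤ))) * hdet + (-(p:ℤ)) * hs
  have hd1 := delta_eq i hi (n+1)
  have hd2 := delta_eq i hi (n+2)
  have c1 : (m:ℝ) = (x:ℝ) * (L i (n+1) : ℝ) + (y:ℝ) * (L i (n+2) : ℝ) := by
    exact_mod_cast hm
  have c2 : (p:ℝ) = (x:ℝ) * (Nat.fib (n+1) : ℝ) + (y:ℝ) * (Nat.fib (n+2) : ℝ) := by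
    exact_mod_cast hp
  have hfact : (m:ℝ) * alpha i - (p:ℝ)
      = (-t)^(n+1) * alpha i * ((x:ℝ) - t * (y:ℝ)) := by
    have hpow : (-t)^(n+2) = (-t)^(n+1) * (-t) := by ring
    linear_combination (alpha i) * c1 - c2 + (x:ℝ) * hd1 + (y:ℝ) * hd2 + ((y:ℝ) * alpha i) * hpow
  have habs : |(m:ℝ) * alpha i - (p:ℝ)| = t^(n+1) * alpha i * |(x:ℝ) - t * (y:ℝ)| := by
    rw [hfact, abs_mul, abs_mul, abs_pow, abs_neg, abs_of_pos t_pos,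
        abs_of_pos (alpha_pos i hi)]
  rw [habs]
  have hpos : 0 < t^(n+1) * alpha i :=
    mul_pos (pow_pos t_pos _) (alpha_pos i hi)
  have hz : 1 ≤ |(x:ℝ) - t * (y:ℝ)| := by
    have hL1 : (1:ℤ) ≤ L i (n+1) := by exact_mod_cast L_pos i hi (n+1)
    have hLn : (1:ℤ) ≤ L i n := by exact_mod_cast L_pos i hi n
    have hL2 : (L i (n+2) : ℤ) = L i (n+1) + L i n := by
      have : L i (n+2) = L i (n+1) + L i n := rfl
      exact_mod_cast this
    have hm1' : (1:ℤ) ≤ (m:ℤ) := by exact_mod_cast hm1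
    have hm2' : (m:ℤ) ≤ L i (n+1) := by exact_mod_cast hm2
    rcases eq_or_ne y 0 with hy | hy
    · subst hy
      have hx : x ≠ 0 := by
        rintro rfl; simp at hm; omega
      have h1 : (1:ℤ) ≤ |x| := Int.one_le_abs hx
      have h2 : (1:ℝ) ≤ |(x:ℝ)| := by
        rw [← Int.cast_abs]; exact_mod_cast h1
      simpa using h2
    · rcases eq_or_ne x 0 with hx | hx
      · exfalso
        subst hx
        simp only [Int.cast_zero, zero_mul, zero_add] at hm
        have hy1 : 1 ≤ y := by
          rcases le_or_gt 1 y with h | h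
          · exact h
          · exfalso
            have hy0 : y ≤ 0 := by omega
            have : y * L i (n+2) ≤ 0 :=
              mul_nonpos_of_nonpos_of_nonneg hy0 (by linarith)
            linarith
        have e2 : (L i (n+2) : ℤ) ≤ y * L i (n+2) :=
          le_mul_of_one_le_left (by linarith) hy1
        linarith
      · rcases lt_trichotomy x 0 with hxn | hx0 | hxp
        · rcases lt_trichotomy y 0 with hyn | hy0 | hyp
          · exfalso
            have e1 : x * L i (n+1) ≤ -(L i (n+1)) := by
              have := mul_le_mul_of_nonneg_right (by omega : x ≤ -1)
                (by linarith : (0:ℤ) ≤ (L i (n+1) : ℤ))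
              linarith
            have e2 : y * L i (n+2) ≤ -(L i (n+2)) := by
              have := mul_le_mul_of_nonneg_right (by omega : y ≤ -1)
                (by linarith : (0:ℤ) ≤ (L i (n+2) : ℤ))
              linarith
            linarith
          · exact absurd hy0 hy
          · have hx' : (x:ℝ) ≤ -1 := by exact_mod_cast (by omega : x ≤ -1)
            have hy' : (1:ℝ) ≤ (y:ℝ) := by exact_mod_cast hyp
            have hle : (x:ℝ) - t * y ≤ -1 := by nlinarith [t_pos]
            rw [abs_of_nonpos (by linarith)]
            linarith
        · exact absurd hx0 hx
        · rcases lt_trichotomy y 0 with hyn | hy0 | hyp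
          · have hx' : (1:ℝ) ≤ (x:ℝ) := by exact_mod_cast hxp
            have hy' : (y:ℝ) ≤ -1 := by exact_mod_cast (by omega : y ≤ -1)
            have hle : (1:ℝ) ≤ (x:ℝ) - t * y := by nlinarith [t_pos]
            exact le_trans hle (le_abs_self _)
          · exact absurd hy0 hy
          · exfalso
            have e1 : (L i (n+1) : ℤ) ≤ x * L i (n+1) :=
              le_mul_of_one_le_left (by linarith) (by omega)
            have e2 : (L i (n+2) : ℤ) ≤ y * L i (n+2) :=
              le_mul_of_one_le_left (by linarith) (by omega)
            linarith
  calc t^(n+1) * alpha i = t^(n+1) * alpha i * 1 := by ring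
    _ ≤ t^(n+1) * alpha i * |(x:ℝ) - t * (y:ℝ)| := by
        exact mul_le_mul_of_nonneg_left hz hpos.le


lemma floor_small (j : ℕ) (hj : j ≤ i) : ⌊(j:ℝ) * alpha i⌋ = 0 := by
  rw [Int.floor_eq_iff]
  constructor
  · push_cast
    exact mul_nonneg (Nat.cast_nonneg j) (alpha_pos i hi).le
  · push_cast
    have hb : (j:ℝ) < beta i := by
      have : (j:ℝ) ≤ (i:ℝ) := by exact_mod_cast hj
      unfold beta; nlinarith [one_lt_phi]
    calc (j:ℝ) * alpha i < beta i * alpha i :=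
          mul_lt_mul_of_pos_right hb (alpha_pos i hi)
    _ = 1 := by rw [mul_comm]; exact alpha_mul_beta i hi
    _ ≤ 0 + 1 := by norm_num

lemma floor_i1 : ⌊((i+1:ℕ):ℝ) * alpha i⌋ = 1 := by
  have hb := beta_pos i hi
  have ha := alpha_pos i hi
  have hab := alpha_mul_beta i hi
  have hile : (1:ℝ) ≤ (i:ℝ) := by exact_mod_cast hi
  rw [Int.floor_eq_iff]
  constructor
  · push_cast
    -- 1 ≤ (i+1)α  ⟺  β ≤ i+1 ⟺ φ ≤ 2
    have h1 : beta i ≤ (i:ℝ) + 1 := by unfold beta; nlinarith [phi_lt_two]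
    nlinarith
  · push_cast
    -- (i+1)α < 2 ⟺ i+1 < 2β
    have h1 : (i:ℝ) + 1 < 2 * beta i := by unfold beta; nlinarith [phi_gt]
    nlinarith

lemma floor_i2 : ⌊((i+2:ℕ):ℝ) * alpha i⌋ = 1 := by
  have hb := beta_pos i hi
  have ha := alpha_pos i hi
  have hab := alpha_mul_beta i hi
  have hile : (1:ℝ) ≤ (i:ℝ) := by exact_mod_cast hi
  rw [Int.floor_eq_iff]
  constructor
  · push_cast
    have h1 : beta i ≤ (i:ℝ) + 2 := by unfold beta; nlinarith [phi_lt_two]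
    nlinarith
  · push_cast
    have h1 : (i:ℝ) + 2 < 2 * beta i := by unfold beta; nlinarith [phi_gt]
    nlinarith

lemma floor_shift (k m : ℕ) (hm1 : 1 ≤ m) (hm2 : m ≤ L i (k+1)) :
    ⌊((L i (k+1) + m : ℕ) : ℝ) * alpha i⌋
      = (Nat.fib (k+1) : ℤ) + ⌊(m:ℝ) * alpha i⌋ := by
  have hδ := delta_eq i hi (k+1)
  have ha := alpha_pos i hi
  set a : ℝ := (m:ℝ) * alpha i with ha_def
  have hx : ((L i (k+1) + m : ℕ):ℝ) * alpha i
      = (a + (-t)^(k+1) * alpha i) + ((Nat.fib (k+1) : ℤ) : ℝ) := by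
    push_cast
    rw [ha_def]
    push_cast at hδ
    linarith [hδ]
  rw [hx, Int.floor_add_intCast]
  have main : ⌊a + (-t)^(k+1) * alpha i⌋ = ⌊a⌋ := by
    have hdl := dist_lb i hi k m
    rcases Nat.even_or_odd (k+1) with he | ho
    · -- positive delta
      rw [he.neg_pow]
      have hdpos : 0 < t^(k+1) * alpha i := mul_pos (pow_pos t_pos _) ha
      rw [Int.floor_eq_iff]
      constructor
      · linarith [Int.floor_le a]
      · by_contra hcon
        push_neg at hcon
        set p : ℤ := ⌊a⌋ + 1 with hp_def
        have hkey := hdl p hm1 hm2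
        have halt : a < p := by
          rw [hp_def]; push_cast; linarith [Int.lt_floor_add_one a]
        have habs : |(m:ℝ) * alpha i - p| = (p:ℝ) - a := by
          rw [← ha_def, abs_of_nonpos (by linarith)]; ring
        rw [habs] at hkey
        have hpc : (p:ℝ) = (⌊a⌋:ℝ) + 1 := by rw [hp_def]; push_cast; ring
        have heq : (p:ℝ) - a = t^(k+1) * alpha i := by
          linarith [hcon, hkey, hpc]
        -- a + t^(k+1) α = p, so (m + L (k+1)) α = p + fib (k+1) : contradicts irrationality
        have hInt : ((m + L i (k+1) : ℕ) : ℝ) * alpha i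
            = ((p + Nat.fib (k+1) : ℤ) : ℝ) := by
          have ht' : (-t)^(k+1) = t^(k+1) := he.neg_pow t
          rw [ht'] at hδ
          push_cast
          push_cast at hδ
          linarith [heq, hδ]
        have hden : ((m + L i (k+1) : ℕ) : ℝ) ≠ 0 := by
          have : 0 < m + L i (k+1) := by omega
          positivity
        apply irrational_alpha i
        refine ⟨((p + Nat.fib (k+1) : ℤ) : ℚ) / ((m + L i (k+1) : ℕ) : ℚ), ?_⟩
        have hdenq : ((m + L i (k+1) : ℕ) : ℚ) ≠ 0 := by
          have : 0 < m + L i (k+1) := by omega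
          positivity
        push_cast
        push_cast at hInt hden
        field_simp
        linarith [hInt]
    · -- negative delta
      rw [ho.neg_pow]
      have hdpos : 0 < t^(k+1) * alpha i := mul_pos (pow_pos t_pos _) ha
      rw [Int.floor_eq_iff]
      constructor
      · -- ⌊a⌋ ≤ a - t^(k+1) α
        have hkey := hdl ⌊a⌋ hm1 hm2
        have habs : |(m:ℝ) * alpha i - ⌊a⌋| = a - ⌊a⌋ := by
          rw [← ha_def, abs_of_nonneg (by linarith [Int.floor_le a])]
        rw [habs] at hkey
        linarith
      · linarith [Int.lt_floor_add_one a]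
  rw [main]; ring

def W (k : ℕ) : ℤ := ⌊((k+2 : ℕ):ℝ) * alpha i⌋ - ⌊((k+1 : ℕ):ℝ) * alpha i⌋


lemma getD_gen1 (k : ℕ) (hk : k < i) :
    (genFibWord i 1).getD k 0 = if k < i - 1 then 0 else 1 := by
  show ((List.replicate (i-1) 0 ++ [1]).getD k 0) = _
  rcases lt_or_ge k (i-1) with h | h
  · rw [if_pos h, List.getD_append _ _ _ k (by simpa using h)]
    rw [List.getD_eq_getElem?_getD, List.getElem?_replicate, if_pos h]
    rfl
  · rw [if_neg (by omega), List.getD_append_right _ _ _ k (by simpa using h)]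
    have : k - (List.replicate (i-1) (0:ℕ)).length = 0 := by simp; omega
    rw [this]
    rfl

lemma mech_aux : ∀ n : ℕ,
    (∀ k, k < L i (n+1) → ((genFibWord i (n+1)).getD k 0 : ℤ) = W i k) ∧
    (∀ k, k < L i (n+2) → ((genFibWord i (n+2)).getD k 0 : ℤ) = W i k) := by
  have S1 : ∀ k, k < L i 1 → ((genFibWord i 1).getD k 0 : ℤ) = W i k := by
    intro k hk
    have hk' : k < i := hk
    rw [getD_gen1 i hi k hk']
    unfold W
    rcases lt_or_ge k (i-1) with h | h
    · rw [if_pos h, floor_small i hi (k+2) (by omega), floor_small i hi (k+1) (by omega)]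
      norm_num
    · rw [if_neg (by omega)]
      have e1 : k + 2 = i + 1 := by omega
      have e2 : k + 1 = i := by omega
      rw [e1, e2, floor_i1 i hi, floor_small i hi i le_rfl]
      norm_num
  have S2 : ∀ k, k < L i 2 → ((genFibWord i 2).getD k 0 : ℤ) = W i k := by
    intro k hk
    have hk' : k < i + 1 := by
      have h0 : L i 2 = L i 1 + L i 0 := rfl
      have h1 : L i 1 = i := rfl
      have h2 : L i 0 = 1 := rfl
      omega
    show (((genFibWord i 1 ++ genFibWord i 0).getD k 0 : ℕ) : ℤ) = W i k
    have hlen : (genFibWord i 1).length = i := by rw [length_gen i hi 1]; rfl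
    rcases lt_or_ge k i with h | h
    · rw [List.getD_append _ _ _ k (by omega)]
      exact S1 k h
    · have hki : k = i := by omega
      rw [List.getD_append_right _ _ _ k (by omega)]
      have hz : k - (genFibWord i 1).length = 0 := by omega
      rw [hz]
      have h0 : (genFibWord i 0).getD 0 0 = 0 := rfl
      rw [h0]
      unfold W
      have e2 : k + 2 = i + 2 := by omega
      have e1 : k + 1 = i + 1 := by omega
      rw [e1, e2, floor_i2 i hi, floor_i1 i hi]
      norm_num
  intro n
  induction n with
  | zero => exact ⟨S1, S2⟩
  | succ n ih =>
    refine ⟨ih.2, ?_⟩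
    intro k hk
    have hk3 : k < L i (n+3) := hk
    show (((genFibWord i (n+2) ++ genFibWord i (n+1)).getD k 0 : ℕ) : ℤ) = W i k
    have hlen : (genFibWord i (n+2)).length = L i (n+2) := length_gen i hi (n+2)
    have hL3 : L i (n+3) = L i (n+2) + L i (n+1) := rfl
    clear hk
    rcases lt_or_ge k (L i (n+2)) with h | h
    · rw [List.getD_append _ _ _ k (by omega)]
      exact ih.2 k h
    · rw [List.getD_append_right _ _ _ k (by omega)]
      set j := k - L i (n+2) with hj_def
      have hj : j < L i (n+1) := by omega
      have hkj : k = L i (n+2) + j := by omega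
      have hstep : ((genFibWord i (n+1)).getD j 0 : ℤ) = W i j := ih.1 j hj
      rw [hlen, ← hj_def, hstep]
      -- now show W i k = W i j
      have hLn : 1 ≤ L i n := L_pos i hi n
      have hL2 : L i (n+2) = L i (n+1) + L i n := rfl
      have hnorm : L i (n+1+1) = L i (n+2) := rfl
      have f2 : ⌊((L i (n+2) + (j+2) : ℕ) : ℝ) * alpha i⌋
          = (Nat.fib (n+2) : ℤ) + ⌊((j+2:ℕ):ℝ) * alpha i⌋ :=
        floor_shift i hi (n+1) (j+2) (by omega) (by omega)
      have f1 : ⌊((L i (n+2) + (j+1) : ℕ) : ℝ) * alpha i⌋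
          = (Nat.fib (n+2) : ℤ) + ⌊((j+1:ℕ):ℝ) * alpha i⌋ :=
        floor_shift i hi (n+1) (j+1) (by omega) (by omega)
      unfold W
      have e2 : k + 2 = L i (n+2) + (j+2) := by omega
      have e1 : k + 1 = L i (n+2) + (j+1) := by omega
      rw [e1, e2, f1, f2]
      ring

lemma mech (k : ℕ) : ((iFibWord i k : ℤ)) = W i k := by
  have h := (mech_aux i hi k).2 k (lt_L i hi k)
  exact h

lemma w_cases (k : ℕ) : iFibWord i k = 0 ∨ iFibWord i k = 1 := by
  have hm := mech i hi k
  have ha := alpha_pos i hi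
  have ha1 := alpha_lt_one i hi
  have h1 : ⌊((k+1:ℕ):ℝ) * alpha i⌋ ≤ ⌊((k+2:ℕ):ℝ) * alpha i⌋ := by
    apply Int.floor_le_floor
    push_cast
    nlinarith
  have h2 : ⌊((k+2:ℕ):ℝ) * alpha i⌋ ≤ ⌊((k+1:ℕ):ℝ) * alpha i⌋ + 1 := by
    have : ((k+2:ℕ):ℝ) * alpha i ≤ ((k+1:ℕ):ℝ) * alpha i + 1 := by
      push_cast; nlinarith
    calc ⌊((k+2:ℕ):ℝ) * alpha i⌋ ≤ ⌊((k+1:ℕ):ℝ) * alpha i + 1⌋ := Int.floor_le_floor this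
    _ = _ := by
        rw [show ((k+1:ℕ):ℝ) * alpha i + 1 = ((k+1:ℕ):ℝ) * alpha i + ((1:ℤ):ℝ) by norm_num,
          Int.floor_add_intCast]
  unfold W at hm
  omega


/-- the window of length `n` starting at `k` -/
def window (k n : ℕ) : List ℕ := (List.range n).map fun j => iFibWord i (k + j)

omit hi in
lemma mem_F (u : List ℕ) (n : ℕ) :
    u ∈ factorsOfLength (iFibWord i) n ↔ ∃ k, u = window i k n := Iff.rfl

omit hi in
lemma window_length (k n : ℕ) : (window i k n).length = n := by simp [window]

omit hi in
lemma window_succ (k n : ℕ) :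
    window i k (n+1) = window i k n ++ [iFibWord i (k + n)] := by
  unfold window
  rw [show n + 1 = n.succ from rfl, List.range_succ, List.map_append]
  rfl

omit hi in
lemma window_cons (k n : ℕ) :
    window i k (n+1) = iFibWord i k :: window i (k+1) n := by
  unfold window
  rw [show n + 1 = n.succ from rfl, List.range_succ_eq_map, List.map_cons, List.map_map]
  simp only [Nat.add_zero]
  congr 1
  apply List.map_congr_left
  intro a _
  simp [Function.comp]
  congr 1
  omega

omit hi in
lemma window_getElem (k n m : ℕ) (h : m < n) :
    (window i k n)[m]'(by rw [window_length]; exact h) = iFibWord i (k + m) := by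
  unfold window
  rw [List.getElem_map]
  congr 1
  rw [List.getElem_range]

omit hi in
lemma window_ext (a b n : ℕ) (h : window i a n = window i b n) :
    ∀ m, m < n → iFibWord i (a + m) = iFibWord i (b + m) := by
  intro m hm
  have h1 := window_getElem i a n m hm
  have h2 := window_getElem i b n m hm
  rw [← h1, ← h2]
  exact List.getElem_of_eq h _

lemma window_sum (k n : ℕ) :
    ((window i k n).sum : ℤ)
      = ⌊((k+n+1 : ℕ):ℝ) * alpha i⌋ - ⌊((k+1 : ℕ):ℝ) * alpha i⌋ := by
  induction n with
  | zero => simp [window]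
  | succ n ih =>
    rw [window_succ, List.sum_append]
    have hw := mech i hi (k + n)
    unfold W at hw
    have e1 : k+(n+1)+1 = k+n+2 := by omega
    have e2 : k+n+1+1 = k+n+2 := by omega
    rw [e1]
    rw [e2] at hw
    have hss : (List.sum [iFibWord i (k+n)]) = iFibWord i (k+n) := by simp
    rw [hss]
    push_cast
    push_cast at ih hw
    linarith [ih, hw]

lemma sum_lb (k n : ℕ) : ⌊((n:ℕ):ℝ) * alpha i⌋ ≤ ((window i k n).sum : ℤ) := by
  rw [window_sum i hi]
  set x := ((k+1 : ℕ):ℝ) * alpha i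
  set y := ((n:ℕ):ℝ) * alpha i
  have hxy : ((k+n+1 : ℕ):ℝ) * alpha i = x + y := by
    unfold x y; push_cast; ring
  rw [hxy]
  have h1 : ((⌊x⌋ + ⌊y⌋ : ℤ) : ℝ) ≤ x + y := by
    push_cast
    linarith [Int.floor_le x, Int.floor_le y]
  have := Int.le_floor.2 h1
  omega

lemma sum_ub (k n : ℕ) : ((window i k n).sum : ℤ) ≤ ⌊((n:ℕ):ℝ) * alpha i⌋ + 1 := by
  rw [window_sum i hi]
  set x := ((k+1 : ℕ):ℝ) * alpha i
  set y := ((n:ℕ):ℝ) * alpha i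
  have hxy : ((k+n+1 : ℕ):ℝ) * alpha i = x + y := by
    unfold x y; push_cast; ring
  rw [hxy]
  have h1 : x + y < ((⌊x⌋ + ⌊y⌋ + 2 : ℤ) : ℝ) := by
    push_cast
    linarith [Int.lt_floor_add_one x, Int.lt_floor_add_one y]
  have := Int.floor_lt.2 h1
  omega

lemma balance {u v : List ℕ} {n : ℕ} (hu : u ∈ factorsOfLength (iFibWord i) n)
    (hv : v ∈ factorsOfLength (iFibWord i) n) : (u.sum : ℤ) ≤ (v.sum : ℤ) + 1 := by
  obtain ⟨k, rfl⟩ := hu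
  obtain ⟨l, rfl⟩ := hv
  have h1 := sum_ub i hi k n
  have h2 := sum_lb i hi l n
  show ((window i k n).sum : ℤ) ≤ ((window i l n).sum : ℤ) + 1
  omega

lemma F_finite (n : ℕ) : (factorsOfLength (iFibWord i) n).Finite := by
  have : Finite (Fin n → Fin 2) := by infer_instance
  apply Set.Finite.of_finite_image (f := fun u => (fun j : Fin n => (⟨min (u.getD j 0) 1, by omega⟩ : Fin 2)))
  · exact Set.toFinite _
  · rintro u ⟨k, rfl⟩ v ⟨l, rfl⟩ h
    rw [show (List.map (fun j => iFibWord i (k + j)) (List.range n)) = window i k n from rfl] at h ⊢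
    rw [show (List.map (fun j => iFibWord i (l + j)) (List.range n)) = window i l n from rfl] at h ⊢
    have hext : ∀ m, m < n → iFibWord i (k + m) = iFibWord i (l + m) := by
      intro m hm
      have hval := congrFun h ⟨m, hm⟩
      simp only [Fin.mk.injEq] at hval
      have hu : (window i k n).getD m 0 = iFibWord i (k + m) := by
        rw [List.getD_eq_getElem _ _ (by rw [window_length]; exact hm)]
        exact window_getElem i k n m hm
      have hv : (window i l n).getD m 0 = iFibWord i (l + m) := by
        rw [List.getD_eq_getElem _ _ (by rw [window_length]; exact hm)]
        exact window_getElem i l n m hm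
      rw [hu, hv] at hval
      rcases w_cases i hi (k+m) with h0|h0 <;> rcases w_cases i hi (l+m) with h1|h1 <;>
        rw [h0, h1] at hval ⊢ <;> simp_all
    unfold window
    apply List.map_congr_left
    intro a ha
    exact hext a (List.mem_range.1 ha)

/-- `u` is a right special factor of length `n`. -/
def Spec (n : ℕ) (u : List ℕ) : Prop :=
  (∃ k, u = window i k n) ∧ (∃ k, u ++ [0] = window i k (n+1)) ∧
    (∃ k, u ++ [1] = window i k (n+1))

lemma spec_unique : ∀ n : ℕ, ∀ u v : List ℕ, Spec i n u → Spec i n v → u = v := by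
  intro n
  induction n with
  | zero =>
    rintro u v ⟨⟨k, rfl⟩, -⟩ ⟨⟨l, rfl⟩, -⟩
    simp [window]
  | succ n ih =>
    rintro u v ⟨⟨k, hk⟩, ⟨k0, hk0⟩, ⟨k1, hk1⟩⟩ ⟨⟨l, hl⟩, ⟨l0, hl0⟩, ⟨l1, hl1⟩⟩
    rw [window_cons] at hk hl
    -- tails are special
    have tailspec : ∀ (m m0 m1 : ℕ) (x : List ℕ),
        x = iFibWord i m :: window i (m+1) n →
        x ++ [0] = window i m0 (n+2) → x ++ [1] = window i m1 (n+2) →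
        Spec i n (window i (m+1) n) := by
      intro m m0 m1 x hx h0 h1
      refine ⟨⟨m+1, rfl⟩, ⟨m0+1, ?_⟩, ⟨m1+1, ?_⟩⟩
      · have := h0
        rw [hx, window_cons] at this
        simp only [List.cons_append] at this
        exact (List.cons_eq_cons.mp this).2
      · have := h1
        rw [hx, window_cons] at this
        simp only [List.cons_append] at this
        exact (List.cons_eq_cons.mp this).2
    have hsu : Spec i n (window i (k+1) n) := tailspec k k0 k1 u hk hk0 hk1
    have hsv : Spec i n (window i (l+1) n) := tailspec l l0 l1 v hl hl0 hl1
    have htails : window i (k+1) n = window i (l+1) n := ih _ _ hsu hsv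
    set s := window i (k+1) n with hs
    -- heads
    rcases w_cases i hi k with ha | ha <;> rcases w_cases i hi l with hb | hb
    · rw [hk, hl, ← htails, ha, hb]
    · -- a = 0, b = 1 : contradiction with balance
      exfalso
      have hx : (u ++ [0]) ∈ factorsOfLength (iFibWord i) (n+2) := ⟨k0, hk0⟩
      have hy : (v ++ [1]) ∈ factorsOfLength (iFibWord i) (n+2) := ⟨l1, hl1⟩
      have hbal := balance i hi hy hx
      rw [hk, hl, ← htails, ha, hb] at hbal
      simp [List.sum_append] at hbal
    · exfalso
      have hx : (v ++ [0]) ∈ factorsOfLength (iFibWord i) (n+2) := ⟨l0, hl0⟩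
      have hy : (u ++ [1]) ∈ factorsOfLength (iFibWord i) (n+2) := ⟨k1, hk1⟩
      have hbal := balance i hi hy hx
      rw [hk, hl, ← htails, ha, hb] at hbal
      simp [List.sum_append] at hbal
    · rw [hk, hl, ← htails, ha, hb]

lemma exists_spec (n : ℕ) : ∃ u, Spec i n u := by
  by_contra hcon
  push_neg at hcon
  -- determinism
  have det : ∀ k l, window i k n = window i l n →
      iFibWord i (k+n) = iFibWord i (l+n) := by
    intro k l hkl
    rcases w_cases i hi (k+n) with h0|h0 <;> rcases w_cases i hi (l+n) with h1|h1 <;>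
      try (rw [h0, h1])
    · exfalso
      apply hcon (window i k n)
      refine ⟨⟨k, rfl⟩, ⟨k, ?_⟩, ⟨l, ?_⟩⟩
      · rw [window_succ, h0]
      · rw [window_succ, h1, hkl]
    · exfalso
      apply hcon (window i k n)
      refine ⟨⟨k, rfl⟩, ⟨l, ?_⟩, ⟨k, ?_⟩⟩
      · rw [window_succ, h1, hkl]
      · rw [window_succ, h0]
  -- pigeonhole
  have hfin : Finite (factorsOfLength (iFibWord i) n) := (F_finite i hi n).to_subtype
  obtain ⟨k, l, hne, heq⟩ := Finite.exists_ne_map_eq_of_infinite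
    (fun k : ℕ => (⟨window i k n, ⟨k, rfl⟩⟩ : (factorsOfLength (iFibWord i) n)))
  have heq' : window i k n = window i l n := by
    exact congrArg Subtype.val heq
  have main : ∀ k l : ℕ, k < l → window i k n = window i l n → False := by
    clear hne heq heq' k l
    intro k l hkl heq
    set p := l - k with hp_def
    have hp1 : 1 ≤ p := by omega
    have hlk : l = k + p := by omega
    -- windows propagate
    have prop : ∀ j, window i (k+j) n = window i (l+j) n := by
      intro j
      induction j with
      | zero => simpa using heq
      | succ j ihj =>
        unfold window
        apply List.map_congr_left
        intro m hm
        have hm' : m < n := List.mem_range.1 hm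
        rcases Nat.lt_or_ge (m+1) n with hc | hc
        · have := window_ext i (k+j) (l+j) n ihj (m+1) hc
          have e1 : k+j+(m+1) = k+(j+1)+m := by omega
          have e2 : l+j+(m+1) = l+(j+1)+m := by omega
          rw [e1, e2] at this
          exact this
        · have hmn : m + 1 = n := by omega
          have := det (k+j) (l+j) ihj
          have e1 : k+j+n = k+(j+1)+m := by omega
          have e2 : l+j+n = l+(j+1)+m := by omega
          rw [e1, e2] at this
          exact this
    have hper : ∀ m, k + n ≤ m → iFibWord i (m+p) = iFibWord i m := by
      intro m hm
      set j := m - (k+n) with hj_def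
      have := det (k+j) (l+j) (prop j)
      have e1 : k+j+n = m := by omega
      have e2 : l+j+n = m+p := by omega
      rw [e1, e2] at this
      exact this.symm
    -- rationality contradiction
    set N := k + n with hN
    set c : ℤ := ⌊((N+p+1:ℕ):ℝ) * alpha i⌋ - ⌊((N+1:ℕ):ℝ) * alpha i⌋ with hc_def
    have hgs : ∀ m, N ≤ m →
        (⌊((m+p+2:ℕ):ℝ) * alpha i⌋ - ⌊((m+p+1:ℕ):ℝ) * alpha i⌋ : ℤ)
          = ⌊((m+2:ℕ):ℝ) * alpha i⌋ - ⌊((m+1:ℕ):ℝ) * alpha i⌋ := by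
      intro m hm
      have h1 := mech i hi (m+p)
      have h2 := mech i hi m
      unfold W at h1 h2
      have hw := hper m hm
      have e1 : m+p+2 = m+p+2 := rfl
      rw [hw] at h1
      omega
    have hconst : ∀ m, N ≤ m →
        (⌊((m+p+1:ℕ):ℝ) * alpha i⌋ - ⌊((m+1:ℕ):ℝ) * alpha i⌋ : ℤ) = c := by
      intro m hm
      induction m, hm using Nat.le_induction with
      | base => rfl
      | succ m hm ihm =>
        have h := hgs m hm
        have e1 : m+1+p+1 = m+p+2 := by omega
        have e2 : m+1+1 = m+2 := by omega
        rw [e1, e2]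
        omega
    have hiter : ∀ j : ℕ, (⌊((N + j*p + 1 : ℕ):ℝ) * alpha i⌋ : ℤ)
        = ⌊((N+1:ℕ):ℝ) * alpha i⌋ + j * c := by
      intro j
      induction j with
      | zero => simp
      | succ j ihj =>
        have h := hconst (N + j*p) (by omega)
        have e1 : N + j*p + p + 1 = N + (j+1)*p + 1 := by ring
        rw [e1] at h
        push_cast
        push_cast at ihj h
        linarith
    have hrat : (p:ℝ) * alpha i = (c:ℝ) := by
      by_contra hne'
      have hd : (0:ℝ) < |(p:ℝ) * alpha i - c| := abs_pos.2 (sub_ne_zero.2 hne')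
      obtain ⟨j, hj⟩ := exists_nat_gt (2 / |(p:ℝ) * alpha i - (c:ℝ)|)
      have hb1 := Int.floor_le (((N + j*p + 1 : ℕ):ℝ) * alpha i)
      have hb2 := Int.lt_floor_add_one (((N + j*p + 1 : ℕ):ℝ) * alpha i)
      have hb3 := Int.floor_le (((N + 1 : ℕ):ℝ) * alpha i)
      have hb4 := Int.lt_floor_add_one (((N + 1 : ℕ):ℝ) * alpha i)
      rw [hiter j] at hb1 hb2
      push_cast at hb1 hb2 hb3 hb4
      -- |j * (pα - c)| < 2
      have habs : (j:ℝ) * |(p:ℝ) * alpha i - (c:ℝ)| < 2 := by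
        have h1 : (j:ℝ) * ((p:ℝ) * alpha i - (c:ℝ)) < 2 := by nlinarith
        have h2 : -2 < (j:ℝ) * ((p:ℝ) * alpha i - (c:ℝ)) := by nlinarith
        rcases abs_cases ((p:ℝ) * alpha i - (c:ℝ)) with ⟨he, -⟩ | ⟨he, -⟩ <;> rw [he] <;> nlinarith
      have hj2 : 2 < (j:ℝ) * |(p:ℝ) * alpha i - (c:ℝ)| := by
        rw [div_lt_iff₀ hd] at hj
        linarith
      linarith
    apply irrational_alpha i
    refine ⟨(c:ℚ) / (p:ℚ), ?_⟩
    have hp0 : ((p:ℕ):ℝ) ≠ 0 := by positivity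
    push_cast
    rw [div_eq_iff (by exact_mod_cast hp0)]
    linarith [hrat]
  rcases hne.lt_or_gt with h | h
  · exact main k l h heq'
  · exact main l k h heq'.symm

lemma ncard_F0 : (factorsOfLength (iFibWord i) 0).ncard = 1 := by
  have h : factorsOfLength (iFibWord i) 0 = {([] : List ℕ)} := by
    ext u
    simp [factorsOfLength]
  rw [h]
  exact Set.ncard_singleton _

lemma step_le (n : ℕ) : (factorsOfLength (iFibWord i) (n+1)).ncard
    ≤ (factorsOfLength (iFibWord i) n).ncard + 1 := by
  classical
  set F : ℕ → Set (List ℕ) := factorsOfLength (iFibWord i) with hF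
  set S0 : Set (List ℕ) := {u | u ∈ F n ∧ u ++ [0] ∈ F (n+1)} with hS0
  set S1 : Set (List ℕ) := {u | u ∈ F n ∧ u ++ [1] ∈ F (n+1)} with hS1
  have h0fin : S0.Finite := (F_finite i hi n).subset (fun u hu => hu.1)
  have h1fin : S1.Finite := (F_finite i hi n).subset (fun u hu => hu.1)
  have hsub : F (n+1) ⊆ ((· ++ [0]) '' S0) ∪ ((· ++ [1]) '' S1) := by
    rintro u ⟨k, rfl⟩
    rw [show (List.map (fun j => iFibWord i (k + j)) (List.range (n+1)))
        = window i k (n+1) from rfl]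
    rcases w_cases i hi (k+n) with h0 | h0
    · left
      refine ⟨window i k n, ⟨⟨k, rfl⟩, ⟨k, ?_⟩⟩, ?_⟩
      · show window i k n ++ [0] = window i k (n+1)
        rw [window_succ, h0]
      · show window i k n ++ [0] = window i k (n+1)
        rw [window_succ, h0]
    · right
      refine ⟨window i k n, ⟨⟨k, rfl⟩, ⟨k, ?_⟩⟩, ?_⟩
      · show window i k n ++ [1] = window i k (n+1)
        rw [window_succ, h0]
      · show window i k n ++ [1] = window i k (n+1)
        rw [window_succ, h0]
  have hinj0 : Function.Injective (· ++ [(0:ℕ)]) := fun a b h => by simpa using h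
  have hinj1 : Function.Injective (· ++ [(1:ℕ)]) := fun a b h => by simpa using h
  have hfin01 : (((· ++ [(0:ℕ)]) '' S0) ∪ ((· ++ [1]) '' S1)).Finite :=
    (h0fin.image _).union (h1fin.image _)
  calc (F (n+1)).ncard ≤ (((· ++ [0]) '' S0) ∪ ((· ++ [1]) '' S1)).ncard :=
        Set.ncard_le_ncard hsub hfin01
    _ ≤ ((· ++ [(0:ℕ)]) '' S0).ncard + ((· ++ [(1:ℕ)]) '' S1).ncard :=
        Set.ncard_union_le _ _
    _ = S0.ncard + S1.ncard := by
        rw [Set.ncard_image_of_injective S0 hinj0, Set.ncard_image_of_injective S1 hinj1]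
    _ = (S0 ∪ S1).ncard + (S0 ∩ S1).ncard :=
        (Set.ncard_union_add_ncard_inter S0 S1 h0fin h1fin).symm
    _ ≤ (F n).ncard + 1 := by
        have hA : (S0 ∪ S1).ncard ≤ (F n).ncard :=
          Set.ncard_le_ncard (by rintro u (hu | hu) <;> exact hu.1) (F_finite i hi n)
        have hB : (S0 ∩ S1).ncard ≤ 1 := by
          rcases Set.eq_empty_or_nonempty (S0 ∩ S1) with he | ⟨u, hu⟩
          · rw [he]; simp
          · have hsub1 : S0 ∩ S1 ⊆ {u} := by
              intro v hv
              have huu : Spec i n u := ⟨hu.1.1, hu.1.2, hu.2.2⟩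
              have hvv : Spec i n v := ⟨hv.1.1, hv.1.2, hv.2.2⟩
              simp [spec_unique i hi n v u hvv huu]
            calc (S0 ∩ S1).ncard ≤ ({u} : Set (List ℕ)).ncard :=
                  Set.ncard_le_ncard hsub1 (Set.finite_singleton u)
              _ = 1 := Set.ncard_singleton u
        omega

lemma step_ge (n : ℕ) : (factorsOfLength (iFibWord i) n).ncard + 1
    ≤ (factorsOfLength (iFibWord i) (n+1)).ncard := by
  classical
  obtain ⟨u, hu⟩ := exists_spec i hi n
  obtain ⟨hu0, hu1⟩ := hu.2
  have hu1' : u ++ [1] ∈ factorsOfLength (iFibWord i) (n+1) := by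
    obtain ⟨k, hk⟩ := hu1; exact ⟨k, hk⟩
  have hu0' : u ++ [0] ∈ factorsOfLength (iFibWord i) (n+1) := by
    obtain ⟨k, hk⟩ := hu0; exact ⟨k, hk⟩
  have himg : factorsOfLength (iFibWord i) n
      = List.dropLast '' (factorsOfLength (iFibWord i) (n+1) \ {u ++ [1]}) := by
    ext v
    constructor
    · rintro ⟨k, rfl⟩
      rw [show (List.map (fun j => iFibWord i (k + j)) (List.range n))
          = window i k n from rfl]
      by_cases hcase : window i k (n+1) = u ++ [1]
      · refine ⟨u ++ [0], ⟨hu0', ?_⟩, ?_⟩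
        · simp only [Set.mem_singleton_iff]
          intro hmem
          have := List.append_cancel_left hmem
          simp at this
        · have h1 : (window i k (n+1)).dropLast = window i k n := by
            rw [window_succ]; exact List.dropLast_concat
          have h2 : (u ++ [1]).dropLast = u := List.dropLast_concat
          have h3 : (u ++ [0]).dropLast = u := List.dropLast_concat
          rw [h3, ← h2, ← hcase, h1]
      · refine ⟨window i k (n+1), ⟨⟨k, rfl⟩, by simpa using hcase⟩, ?_⟩
        rw [window_succ]; exact List.dropLast_concat
    · rintro ⟨x, ⟨⟨k, rfl⟩, -⟩, rfl⟩
      show (window i k (n+1)).dropLast ∈ _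
      rw [window_succ, List.dropLast_concat]
      exact ⟨k, rfl⟩
  have hfin1 : (factorsOfLength (iFibWord i) (n+1)).Finite := F_finite i hi (n+1)
  have hdfin : (factorsOfLength (iFibWord i) (n+1) \ {u ++ [1]}).Finite :=
    hfin1.subset Set.diff_subset
  have h1 : (factorsOfLength (iFibWord i) n).ncard
      ≤ (factorsOfLength (iFibWord i) (n+1) \ {u ++ [1]}).ncard := by
    rw [himg]
    exact Set.ncard_image_le hdfin
  have h2 : (factorsOfLength (iFibWord i) (n+1) \ {u ++ [1]}).ncard
      = (factorsOfLength (iFibWord i) (n+1)).ncard - 1 :=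
    Set.ncard_diff_singleton_of_mem hu1'
  have h3 : 0 < (factorsOfLength (iFibWord i) (n+1)).ncard :=
    (Set.ncard_pos hfin1).2 ⟨u ++ [1], hu1'⟩
  omega

end GF

/-- Every i-Fibonacci word is Sturmian: it has exactly n+1 factors of length n. -/
theorem stmt_9 (i : ℕ) (hi : 1 ≤ i) (n : ℕ) :
    (factorsOfLength (iFibWord i) n).ncard = n + 1 := by
  induction n with
  | zero => exact GF.ncard_F0 i hi
  | succ n ih =>
    have h1 := GF.step_le i hi n
    have h2 := GF.step_ge i hi n
    omega
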